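/- (Symmetrization over cyclic and reflected shifts produces a bordered symmetric circulant matrix.) Let T ≥ 1 and let A be a symmetric positive semidefinite (T+1)×(T+1) real matrix. For each k ∈ Fin T and each d ∈ {+1, −1}, let π_{k,d} be the permutation of {0,1,…,T} that fixes the index T and maps each i < T to (d·i + k) mod T, and let A^{(k,d)} be the matrix with entries (A^{(k,d)})_{i,j} = A_{π_{k,d}(i), π_{k,d}(j)}. Then the average A' = (1/(2T)) · ∑_{k ∈ Fin T} ∑_{d ∈ {±1}} A^{(k,d)} is positive semidefinite and has the form A' = [[circ(m), m_T·1],[m_T·1ᵀ, m_{T+1}]] for some m : Fin T → ℝ with m_t = m_{(T−t) mod T} for all t and some m_T, m_{T+1} ∈ ℝ. -/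

import Mathlib

/-!
The maps `π_{k,d}` form a dihedral group acting on `Fin T` and fixing the border index, so the
sum of all conjugates `A^{(k,d)}` is unchanged by a further conjugation with a rotation `π_{i,+1}`
or with the reflection `π_{0,-1}`. Rotation invariance makes the `Fin T` block circulant and the
border constant, reflection invariance makes the circulant vector even. Positive semidefiniteness
survives conjugation by any reindexing, sums and nonnegative scaling.
-/

/-- The permutation `π_{k,d}` of `Fin T ⊕ Unit` fixing the border index and mapping
`i ↦ (d·i + k) mod T` on `Fin T`, where `d = +1` (`Bool` value `true`) or `d = -1`
(`Bool` value `false`). -/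
def shiftPerm (T : ℕ) (k : Fin T) (d : Bool) : (Fin T ⊕ Unit) → (Fin T ⊕ Unit) :=
  fun x =>
    match x with
    | Sum.inl i => Sum.inl (if d then i + k else k - i)
    | Sum.inr u => Sum.inr u

section shiftPerm

variable {T : ℕ} [NeZero T]

theorem shiftPerm_shiftPerm_true (k i : Fin T) (d : Bool) (x : Fin T ⊕ Unit) :
    shiftPerm T k d (shiftPerm T i true x) =
      shiftPerm T (if d then i + k else k - i) d x := by
  rcases x with j | u <;> cases d <;>
    simp only [shiftPerm, Bool.false_eq_true, if_true, if_false, Sum.inl.injEq] <;> abel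

theorem shiftPerm_shiftPerm_zero_false (k : Fin T) (d : Bool) (x : Fin T ⊕ Unit) :
    shiftPerm T k d (shiftPerm T 0 false x) = shiftPerm T k (!d) x := by
  rcases x with j | u <;> cases d <;>
    simp only [shiftPerm, Bool.false_eq_true, Bool.not_false, Bool.not_true, if_true, if_false,
      Sum.inl.injEq] <;> abel

end shiftPerm

def dihedralSum {α : Type*} [AddCommMonoid α] (T : ℕ)
    (A : Matrix (Fin T ⊕ Unit) (Fin T ⊕ Unit) α) :
    Matrix (Fin T ⊕ Unit) (Fin T ⊕ Unit) α :=
  ∑ k : Fin T, ∑ d : Bool, A.submatrix (shiftPerm T k d) (shiftPerm T k d)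

section dihedralSum

variable {α : Type*} [AddCommMonoid α] {T : ℕ} [NeZero T]
  (A : Matrix (Fin T ⊕ Unit) (Fin T ⊕ Unit) α)

theorem dihedralSum_apply_shiftPerm_true (i : Fin T) (x y : Fin T ⊕ Unit) :
    dihedralSum T A (shiftPerm T i true x) (shiftPerm T i true y) = dihedralSum T A x y := by
  simp only [dihedralSum, Matrix.sum_apply, Matrix.submatrix_apply, shiftPerm_shiftPerm_true]
  rw [Finset.sum_comm, Finset.sum_comm (γ := Fin T)]
  refine Fintype.sum_congr _ _ fun d => ?_
  cases d
  · exact Equiv.sum_comp (Equiv.subRight i) fun k =>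
      A (shiftPerm T k false x) (shiftPerm T k false y)
  · exact Equiv.sum_comp (Equiv.addLeft i) fun k =>
      A (shiftPerm T k true x) (shiftPerm T k true y)

theorem dihedralSum_apply_shiftPerm_zero_false (x y : Fin T ⊕ Unit) :
    dihedralSum T A (shiftPerm T 0 false x) (shiftPerm T 0 false y) = dihedralSum T A x y := by
  simp only [dihedralSum, Matrix.sum_apply, Matrix.submatrix_apply,
    shiftPerm_shiftPerm_zero_false]
  exact Fintype.sum_congr _ _ fun k =>
    Equiv.sum_comp Equiv.boolNot fun d => A (shiftPerm T k d x) (shiftPerm T k d y)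

end dihedralSum

theorem Matrix.PosSemidef.dihedralSum {R : Type*} [Ring R] [PartialOrder R] [StarRing R]
    [AddLeftMono R] {T : ℕ} {A : Matrix (Fin T ⊕ Unit) (Fin T ⊕ Unit) R} (hA : A.PosSemidef) :
    (dihedralSum T A).PosSemidef :=
  posSemidef_sum _ fun _ _ => posSemidef_sum _ fun _ _ => hA.submatrix _

theorem exists_eq_bordered_circulant_of_invariant {α : Type*} {T : ℕ} [NeZero T]
    {B : Matrix (Fin T ⊕ Unit) (Fin T ⊕ Unit) α} (hB : B.IsSymm)
    (hshift : ∀ i x y, B (shiftPerm T i true x) (shiftPerm T i true y) = B x y)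
    (hreflect : ∀ x y, B (shiftPerm T 0 false x) (shiftPerm T 0 false y) = B x y) :
    ∃ (m : Fin T → α) (mT mT1 : α), (∀ t : Fin T, m t = m (-t)) ∧
      B = Matrix.fromBlocks (Matrix.of fun i j : Fin T => m (j - i))
        (Matrix.of fun (_ : Fin T) (_ : Unit) => mT) (Matrix.of fun (_ : Unit) (_ : Fin T) => mT)
        (Matrix.of fun (_ : Unit) (_ : Unit) => mT1) := by
  refine ⟨fun t => B (.inl 0) (.inl t), B (.inl 0) (.inr ()), B (.inr ()) (.inr ()),
    fun t => ?_, Matrix.ext fun x y => ?_⟩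
  · simpa [shiftPerm] using (hreflect (.inl 0) (.inl t)).symm
  · rcases x with i | ⟨⟨⟩⟩ <;> rcases y with j | ⟨⟨⟩⟩
    · simpa [shiftPerm] using hshift i (.inl 0) (.inl (j - i))
    · simpa [shiftPerm] using hshift i (.inl 0) (.inr ())
    · simpa [shiftPerm, hB.apply] using hshift j (.inl 0) (.inr ())
    · rfl

theorem symmetrization_bordered_circulant (T : ℕ) (hT : 1 ≤ T)
    (A : Matrix (Fin T ⊕ Unit) (Fin T ⊕ Unit) ℝ) (hA : A.PosSemidef) :
    ((1 / (2 * (T : ℝ))) •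
        ∑ k : Fin T, ∑ d : Bool,
          (Matrix.of fun i j => A (shiftPerm T k d i) (shiftPerm T k d j) :
            Matrix (Fin T ⊕ Unit) (Fin T ⊕ Unit) ℝ)).PosSemidef ∧
    ∃ (m : Fin T → ℝ) (mT mT1 : ℝ), (∀ t : Fin T, m t = m (-t)) ∧
      (1 / (2 * (T : ℝ))) •
          ∑ k : Fin T, ∑ d : Bool,
            (Matrix.of fun i j => A (shiftPerm T k d i) (shiftPerm T k d j) :
              Matrix (Fin T ⊕ Unit) (Fin T ⊕ Unit) ℝ) =
        Matrix.fromBlocks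
          (Matrix.of fun i j : Fin T => m (j - i))
          (Matrix.of fun (_ : Fin T) (_ : Unit) => mT)
          (Matrix.of fun (_ : Unit) (_ : Fin T) => mT)
          (Matrix.of fun (_ : Unit) (_ : Unit) => mT1) := by
  have : NeZero T := ⟨by omega⟩
  have hPSD : ((1 / (2 * (T : ℝ))) • dihedralSum T A).PosSemidef :=
    hA.dihedralSum.smul (by positivity)
  exact ⟨hPSD, exists_eq_bordered_circulant_of_invariant
    (Matrix.isHermitian_iff_isSymm.1 hPSD.isHermitian)
    (fun i x y => congrArg (1 / (2 * (T : ℝ)) * ·) (dihedralSum_apply_shiftPerm_true A i x y))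
    (fun x y =>
      congrArg (1 / (2 * (T : ℝ)) * ·) (dihedralSum_apply_shiftPerm_zero_false A x y))⟩
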